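/- arXiv:2401.08323 — 7 statements merged into one kernel-verified Lean document; each statement's English description precedes it below -/
import Mathlib

section
/- Let $U:(0,\infty)\to\mathbb{R}$ be continuous and strictly increasing, let $\beta\ge 0$ and $\delta>0$, and let $Y$ be a strictly positive real random variable with $\mathbb{E}[|U(Y)|]<\infty$. Then there exists a unique $\eta\in(0,\infty)$ such that $U(\eta)=\mathbb{E}[U(Y)]-\beta\,\mathbb{E}[(U(\delta\eta)-U(Y))_+]$, where $x_+=\max\{x,0\}$. -/
/-!
With `c = 𝔼[U(Y)]` and the lower partial moment `L(t) = 𝔼[(t - U(Y))₊]`, the value is the zero of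
`f(η) = U(η) - c + β L(U(δη))` on `(0, ∞)`. Since `L` is monotone and `1`-Lipschitz, `f` is
continuous and strictly increasing there. Because `Y > 0` and `U` is strictly increasing, `U` takes
values both above and below `c` on `(0, ∞)`; so `f(b) > 0` for some `b`, while as `η → 0⁺` dominated
convergence gives `L(U(δη)) → 0` (each integrand vanishes once `δη ≤ Y`), so `f < 0` near `0`. The
intermediate value theorem and injectivity of `f` finish the proof.
-/

open MeasureTheory Filter Set Topology

theorem IsPreconnected.existsUnique_eq_zero_of_strictMonoOn {α : Type*} [LinearOrder α]
    [TopologicalSpace α] {s : Set α} {f : α → ℝ} (hs : IsPreconnected s) (hf : ContinuousOn f s)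
    (hmono : StrictMonoOn f s) {a b : α} (ha : a ∈ s) (hfa : f a ≤ 0) (hb : b ∈ s)
    (hfb : 0 ≤ f b) : ∃! x, x ∈ s ∧ f x = 0 := by
  obtain ⟨x, hx, hfx⟩ := hs.intermediate_value ha hb hf ⟨hfa, hfb⟩
  exact ⟨x, ⟨hx, hfx⟩, fun y ⟨hy, hfy⟩ => hmono.injOn hy hx (hfy.trans hfx.symm)⟩

section LowerPartialMoment

variable {Ω : Type*} [MeasurableSpace Ω] {μ : Measure Ω} {X : Ω → ℝ}

variable (μ X) in
noncomputable def lowerPartialMoment (t : ℝ) : ℝ := ∫ ω, max (t - X ω) 0 ∂μ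

theorem lowerPartialMoment_nonneg (t : ℝ) : 0 ≤ lowerPartialMoment μ X t :=
  integral_nonneg fun _ => le_max_right _ _

theorem MeasureTheory.Integrable.max_const_sub_zero [IsFiniteMeasure μ] (hX : Integrable X μ)
    (t : ℝ) :
    Integrable (fun ω => max (t - X ω) 0) μ :=
  ((integrable_const t).sub hX).sup (integrable_const 0)

theorem monotone_lowerPartialMoment [IsFiniteMeasure μ] (hX : Integrable X μ) :
    Monotone (lowerPartialMoment μ X) := fun s t hst =>
  integral_mono (hX.max_const_sub_zero s) (hX.max_const_sub_zero t) fun _ =>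
    max_le_max (sub_le_sub_right hst _) le_rfl

theorem lipschitzWith_lowerPartialMoment [IsProbabilityMeasure μ] (hX : Integrable X μ) :
    LipschitzWith 1 (lowerPartialMoment μ X) := by
  refine LipschitzWith.of_le_add fun s t => ?_
  calc lowerPartialMoment μ X s
      ≤ ∫ ω, (max (t - X ω) 0 + dist s t) ∂μ :=
        integral_mono (hX.max_const_sub_zero s)
          ((hX.max_const_sub_zero t).add (integrable_const _)) fun ω => by
            simp only [Real.dist_eq, max_le_iff]
            constructor <;> linarith [le_abs_self (s - t), le_max_left (t - X ω) 0,
              le_max_right (t - X ω) 0, abs_nonneg (s - t)]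
    _ = lowerPartialMoment μ X t + dist s t := by
        rw [integral_add (hX.max_const_sub_zero t) (integrable_const _), integral_const,
          probReal_univ, one_smul, lowerPartialMoment]

theorem tendsto_lowerPartialMoment_zero [IsFiniteMeasure μ] (hX : Integrable X μ) {ι : Type*}
    {l : Filter ι} [l.IsCountablyGenerated] {g : ι → ℝ} {t₀ : ℝ} (hg₀ : ∀ᶠ i in l, g i ≤ t₀)
    (hgX : ∀ᵐ ω ∂μ, ∀ᶠ i in l, g i ≤ X ω) :
    Tendsto (fun i => lowerPartialMoment μ X (g i)) l (𝓝 0) := by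
  have hlim := tendsto_integral_filter_of_dominated_convergence (μ := μ)
    (F := fun i ω => max (g i - X ω) 0) (f := fun _ => 0) (fun ω => max (t₀ - X ω) 0)
    (Eventually.of_forall fun i => (hX.max_const_sub_zero (g i)).aestronglyMeasurable)
    (hg₀.mono fun i hi => ae_of_all _ fun ω => by
      rw [Real.norm_of_nonneg (le_max_right _ _)]
      exact max_le_max (sub_le_sub_right hi _) le_rfl)
    (hX.max_const_sub_zero t₀)
    (hgX.mono fun ω hω => tendsto_const_nhds.congr' <|
      hω.mono fun i hi => (max_eq_right (sub_nonpos.2 hi)).symm)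
  simpa only [integral_zero, lowerPartialMoment] using hlim

end LowerPartialMoment

section DisappointmentAversion

variable {Ω : Type*} [MeasurableSpace Ω] {μ : Measure Ω} {U : ℝ → ℝ} {β δ : ℝ} {Y : Ω → ℝ}

variable (μ U β δ Y) in
noncomputable def gdaGap (η : ℝ) : ℝ :=
  U η - ∫ ω, U (Y ω) ∂μ + β * lowerPartialMoment μ (fun ω => U (Y ω)) (U (δ * η))

theorem gdaGap_eq_zero_iff {η : ℝ} :
    gdaGap μ U β δ Y η = 0 ↔
      U η = (∫ ω, U (Y ω) ∂μ) - β * ∫ ω, max (U (δ * η) - U (Y ω)) 0 ∂μ := by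
  simp only [gdaGap, lowerPartialMoment]
  constructor <;> intro h <;> linarith

theorem continuousOn_gdaGap [IsProbabilityMeasure μ] (hUc : ContinuousOn U (Ioi 0)) (hδ : 0 < δ)
    (hInt : Integrable (fun ω => U (Y ω)) μ) : ContinuousOn (gdaGap μ U β δ Y) (Ioi 0) := by
  have hUδ : ContinuousOn (fun η => U (δ * η)) (Ioi 0) :=
    hUc.comp (continuousOn_const.mul continuousOn_id) fun η hη => mul_pos hδ hη
  exact (hUc.sub continuousOn_const).add <| continuousOn_const.mul <|
    (lipschitzWith_lowerPartialMoment hInt).continuous.comp_continuousOn hUδ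

theorem strictMonoOn_gdaGap [IsFiniteMeasure μ] (hUm : StrictMonoOn U (Ioi 0)) (hβ : 0 ≤ β)
    (hδ : 0 < δ) (hInt : Integrable (fun ω => U (Y ω)) μ) :
    StrictMonoOn (gdaGap μ U β δ Y) (Ioi 0) := by
  intro x hx y hy hxy
  have hU : U x < U y := hUm hx hy hxy
  have hL := monotone_lowerPartialMoment hInt <|
    hUm.monotoneOn (mul_pos hδ hx) (mul_pos hδ hy) (mul_le_mul_of_nonneg_left hxy.le hδ.le)
  simp only [gdaGap]
  linarith [mul_le_mul_of_nonneg_left hL hβ]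

theorem exists_gdaGap_pos [IsProbabilityMeasure μ] (hUm : StrictMonoOn U (Ioi 0)) (hβ : 0 ≤ β)
    (hYpos : ∀ ω, 0 < Y ω) (hInt : Integrable (fun ω => U (Y ω)) μ) :
    ∃ b ∈ Ioi 0, 0 < gdaGap μ U β δ Y b := by
  obtain ⟨ω₀, hω₀⟩ := exists_integral_le hInt
  have hb : 0 < Y ω₀ + 1 := by linarith [hYpos ω₀]
  have hU : U (Y ω₀) < U (Y ω₀ + 1) := hUm (hYpos ω₀) hb (lt_add_one _)
  have hL := lowerPartialMoment_nonneg (μ := μ) (X := fun ω => U (Y ω)) (U (δ * (Y ω₀ + 1)))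
  refine ⟨Y ω₀ + 1, hb, ?_⟩
  simp only [gdaGap]
  linarith [mul_nonneg hβ hL]

theorem exists_gdaGap_neg [IsProbabilityMeasure μ] (hUm : StrictMonoOn U (Ioi 0)) (hδ : 0 < δ)
    (hYpos : ∀ ω, 0 < Y ω) (hInt : Integrable (fun ω => U (Y ω)) μ) :
    ∃ a ∈ Ioi 0, gdaGap μ U β δ Y a < 0 := by
  have hsmall : ∀ c > 0, ∀ x > 0, ∀ᶠ η in 𝓝[>] (0 : ℝ), U (c * η) ≤ U x := fun c hc x hx => by
    filter_upwards [Ioo_mem_nhdsGT (div_pos hx hc)] with η ⟨hη, hηx⟩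
    exact hUm.monotoneOn (mul_pos hc hη) hx ((lt_div_iff₀' hc).1 hηx).le
  obtain ⟨ω₀, hω₀⟩ := exists_le_integral hInt
  set a₀ := Y ω₀ / 2
  have ha₀ : 0 < a₀ := half_pos (hYpos ω₀)
  have hUa₀ : U a₀ < ∫ ω, U (Y ω) ∂μ :=
    (hUm ha₀ (hYpos ω₀) (half_lt_self (hYpos ω₀))).trans_le hω₀
  have hL : Tendsto (fun η => β * lowerPartialMoment μ (fun ω => U (Y ω)) (U (δ * η)))
      (𝓝[>] 0) (𝓝 0) := by
    simpa only [mul_zero] using (tendsto_lowerPartialMoment_zero hInt (hsmall δ hδ a₀ ha₀)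
      (ae_of_all _ fun ω => hsmall δ hδ _ (hYpos ω))).const_mul β
  obtain ⟨a, ha, hUa, hLa⟩ := (eventually_mem_nhdsWithin.and <| (hsmall 1 one_pos a₀ ha₀).and <|
    hL.eventually (gt_mem_nhds (sub_pos.2 hUa₀))).exists
  refine ⟨a, ha, ?_⟩
  rw [one_mul] at hUa
  simp only [gdaGap]
  linarith

end DisappointmentAversion

theorem gda_value_exists_unique_general
    {Ω : Type*} [MeasurableSpace Ω] (μ : Measure Ω) [IsProbabilityMeasure μ]
    (U : ℝ → ℝ) (hUc : ContinuousOn U (Set.Ioi 0)) (hUm : StrictMonoOn U (Set.Ioi 0))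
    (β δ : ℝ) (hβ : 0 ≤ β) (hδ : 0 < δ)
    (Y : Ω → ℝ) (hYpos : ∀ ω, 0 < Y ω)
    (hInt : Integrable (fun ω => U (Y ω)) μ) :
    ∃! η : ℝ, 0 < η ∧
      U η = (∫ ω, U (Y ω) ∂μ) - β * ∫ ω, max (U (δ * η) - U (Y ω)) 0 ∂μ := by
  obtain ⟨a, ha, hfa⟩ := exists_gdaGap_neg (β := β) hUm hδ hYpos hInt
  obtain ⟨b, hb, hfb⟩ := exists_gdaGap_pos (δ := δ) hUm hβ hYpos hInt
  have hzero := isPreconnected_Ioi.existsUnique_eq_zero_of_strictMonoOn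
    (continuousOn_gdaGap hUc hδ hInt) (strictMonoOn_gdaGap hUm hβ hδ hInt) ha hfa.le hb hfb.le
  exact (existsUnique_congr fun η => and_congr_right' gdaGap_eq_zero_iff).1 hzero

theorem gda_value_exists_unique
    {Ω : Type*} [MeasurableSpace Ω] (μ : Measure Ω) [IsProbabilityMeasure μ]
    (U : ℝ → ℝ) (hUc : ContinuousOn U (Set.Ioi 0)) (hUm : StrictMonoOn U (Set.Ioi 0))
    (β δ : ℝ) (hβ : 0 ≤ β) (hδ : 0 < δ)
    (Y : Ω → ℝ) (hYmeas : Measurable Y) (hYpos : ∀ ω, 0 < Y ω)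
    (hInt : Integrable (fun ω => U (Y ω)) μ) :
    ∃! η : ℝ, 0 < η ∧
      U η = (∫ ω, U (Y ω) ∂μ) - β * ∫ ω, max (U (δ * η) - U (Y ω)) 0 ∂μ :=
  gda_value_exists_unique_general μ U hUc hUm β δ hβ hδ Y hYpos hInt
end

section
/- Let $N$ denote the standard normal CDF and $N'$ its density. For every $\beta>0$, the equation $c+\beta c N(c)+\beta N'(c)=0$ has a unique real solution $c^*$, and $c^*<0$. -/
/-!
With `N = stdNormalCDF` and `N' = stdNormalPDF`, the function `f = cstarFun β` has derivative
`1 + β N(c) > 0`, the terms `β c N'(c)` cancelling because `N''(c) = -c N'(c)`; so `f` is strictly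
increasing and has at most one zero. Since `f 0 = β N'(0) > 0` and `f c ≤ c + β` for `c ≤ 0` (as `N ≥ 0` and `N' ≤ 1`),
the intermediate value theorem gives a zero, and it lies below `0`.
-/

open MeasureTheory ProbabilityTheory

/-- The standard normal density. -/
noncomputable def stdNormalPDF (x : ℝ) : ℝ := gaussianPDFReal 0 1 x

/-- The standard normal cumulative distribution function. -/
noncomputable def stdNormalCDF (c : ℝ) : ℝ := ∫ x in Set.Iic c, stdNormalPDF x

theorem hasDerivAt_integral_Iic {E : Type*} [NormedAddCommGroup E] [NormedSpace ℝ E]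
    [CompleteSpace E] {f : ℝ → E} (hf : Continuous f) (hfi : Integrable f) (c : ℝ) :
    HasDerivAt (fun u ↦ ∫ x in Set.Iic u, f x) (f c) c := by
  have hsplit : (fun u ↦ ∫ x in Set.Iic u, f x) =
      fun u ↦ (∫ x in Set.Iic 0, f x) + ∫ x in (0 : ℝ)..u, f x := by
    funext u
    rw [← intervalIntegral.integral_Iic_sub_Iic hfi.integrableOn hfi.integrableOn]
    abel
  rw [hsplit]
  exact ((hf.integral_hasStrictDerivAt 0 c).hasDerivAt).const_add _

theorem stdNormalPDF_eq (x : ℝ) :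
    stdNormalPDF x = (Real.sqrt (2 * Real.pi))⁻¹ * Real.exp (-x ^ 2 / 2) := by
  simp [stdNormalPDF, gaussianPDFReal]

theorem stdNormalPDF_pos (x : ℝ) : 0 < stdNormalPDF x :=
  gaussianPDFReal_pos 0 1 x one_ne_zero

theorem stdNormalPDF_le_one (x : ℝ) : stdNormalPDF x ≤ 1 := by
  have hsqrt : 1 ≤ Real.sqrt (2 * Real.pi) :=
    Real.one_le_sqrt.mpr (by linarith [Real.pi_gt_three])
  have hexp : Real.exp (-x ^ 2 / 2) ≤ 1 :=
    Real.exp_le_one_iff.mpr (by nlinarith [sq_nonneg x])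
  rw [stdNormalPDF_eq]
  exact mul_le_one₀ (inv_le_one_of_one_le₀ hsqrt) (Real.exp_nonneg _) hexp

theorem hasDerivAt_stdNormalPDF (x : ℝ) :
    HasDerivAt stdNormalPDF (-x * stdNormalPDF x) x := by
  have hexponent : HasDerivAt (fun y : ℝ ↦ -y ^ 2 / 2) (-x) x :=
    (hasDerivAt_pow 2 x).fun_neg.div_const 2 |>.congr_deriv (by norm_num; ring)
  have h := hexponent.exp.const_mul (Real.sqrt (2 * Real.pi))⁻¹
  rw [← funext stdNormalPDF_eq] at h
  exact h.congr_deriv (by rw [stdNormalPDF_eq]; ring)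

theorem stdNormalCDF_nonneg (c : ℝ) : 0 ≤ stdNormalCDF c :=
  integral_nonneg fun x ↦ (stdNormalPDF_pos x).le

theorem continuous_stdNormalPDF : Continuous stdNormalPDF := by
  rw [funext stdNormalPDF_eq]
  fun_prop

theorem hasDerivAt_stdNormalCDF (c : ℝ) : HasDerivAt stdNormalCDF (stdNormalPDF c) c :=
  hasDerivAt_integral_Iic continuous_stdNormalPDF (integrable_gaussianPDFReal 0 1) c

noncomputable def cstarFun (β c : ℝ) : ℝ :=
  c + β * c * stdNormalCDF c + β * stdNormalPDF c

theorem hasDerivAt_cstarFun (β c : ℝ) :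
    HasDerivAt (cstarFun β) (1 + β * stdNormalCDF c) c := by
  have h := ((hasDerivAt_id c).add
    (((hasDerivAt_id c).const_mul β).mul (hasDerivAt_stdNormalCDF c))).add
    ((hasDerivAt_stdNormalPDF c).const_mul β)
  exact h.congr_deriv (by simp only [id]; ring)

theorem strictMono_cstarFun {β : ℝ} (hβ : 0 ≤ β) : StrictMono (cstarFun β) :=
  strictMono_of_deriv_pos fun c ↦ by
    rw [(hasDerivAt_cstarFun β c).deriv]
    nlinarith [stdNormalCDF_nonneg c]

theorem cstarFun_zero_pos {β : ℝ} (hβ : 0 < β) : 0 < cstarFun β 0 := by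
  simpa [cstarFun] using mul_pos hβ (stdNormalPDF_pos 0)

theorem cstarFun_le_add_of_nonpos {β c : ℝ} (hβ : 0 ≤ β) (hc : c ≤ 0) : cstarFun β c ≤ c + β := by
  have hCDF : β * c * stdNormalCDF c ≤ 0 :=
    mul_nonpos_of_nonpos_of_nonneg (mul_nonpos_of_nonneg_of_nonpos hβ hc) (stdNormalCDF_nonneg c)
  have hPDF : β * stdNormalPDF c ≤ β := mul_le_of_le_one_right hβ (stdNormalPDF_le_one c)
  unfold cstarFun
  linarith

theorem cstar_exists_unique_neg (β : ℝ) (hβ : 0 < β) :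
    (∃! c : ℝ, c + β * c * stdNormalCDF c + β * stdNormalPDF c = 0) ∧
    (∀ c : ℝ, c + β * c * stdNormalCDF c + β * stdNormalPDF c = 0 → c < 0) := by
  change (∃! c, cstarFun β c = 0) ∧ ∀ c, cstarFun β c = 0 → c < 0
  have hmono := strictMono_cstarFun hβ.le
  have hcont : Continuous (cstarFun β) :=
    continuous_iff_continuousAt.mpr fun c ↦ (hasDerivAt_cstarFun β c).continuousAt
  have hpos := cstarFun_zero_pos hβ
  have hneg : cstarFun β (-(β + 1)) < 0 := by
    linarith [cstarFun_le_add_of_nonpos hβ.le (by linarith : -(β + 1) ≤ 0)]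
  obtain ⟨c, -, hc⟩ : ∃ c ∈ Set.Icc (-(β + 1)) 0, cstarFun β c = 0 :=
    intermediate_value_Icc (by linarith) hcont.continuousOn ⟨hneg.le, hpos.le⟩
  refine ⟨⟨c, hc, fun y hy ↦ hmono.injective (hy.trans hc.symm)⟩, fun y hy ↦ ?_⟩
  exact hmono.lt_iff_lt.mp (hy ▸ hpos)
end

section
/- Fix $t\in[0,T)$ and a strictly positive random variable $Y$ with $\mathbb{E}[|U(Y)|]<\infty$, where $U$ is continuous and strictly increasing. For $\beta>0$ and $0<\delta_1<\delta_2\le 1$, the GDA values satisfy $\eta(Y,\delta_1,\beta)\ge \eta(Y,\delta_2,\beta)$, where $\eta(Y,\delta,\beta)$ is the unique solution of $U(\eta)=\mathbb{E}[U(Y)]-\beta\,\mathbb{E}[(U(\delta\eta)-U(Y))_+]$. -/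
open MeasureTheory

/-- Monotonicity of the GDA value in `δ` on `(0, 1]`: if `η i` is the GDA value of `Y`
for parameter `δ i` (with `δ₁ < δ₂ ≤ 1`), then `η₁ ≥ η₂`. -/
theorem gda_value_antitone_in_delta_le_one
    {Ω : Type*} [MeasurableSpace Ω] (μ : Measure Ω) [IsProbabilityMeasure μ]
    (U : ℝ → ℝ) (hUc : ContinuousOn U (Set.Ioi 0)) (hUm : StrictMonoOn U (Set.Ioi 0))
    (β δ₁ δ₂ : ℝ) (hβ : 0 < β) (hδ₁ : 0 < δ₁) (hδ : δ₁ < δ₂) (hδ₂ : δ₂ ≤ 1)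
    (Y : Ω → ℝ) (hYmeas : Measurable Y) (hYpos : ∀ ω, 0 < Y ω)
    (hInt : Integrable (fun ω => U (Y ω)) μ)
    (η₁ η₂ : ℝ) (hη₁pos : 0 < η₁) (hη₂pos : 0 < η₂)
    (hη₁ : U η₁ = (∫ ω, U (Y ω) ∂μ) - β * ∫ ω, max (U (δ₁ * η₁) - U (Y ω)) 0 ∂μ)
    (hη₂ : U η₂ = (∫ ω, U (Y ω) ∂μ) - β * ∫ ω, max (U (δ₂ * η₂) - U (Y ω)) 0 ∂μ) :
    η₁ ≥ η₂ := by
  by_contra h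
  push_neg at h
  have hδ₂pos : 0 < δ₂ := hδ₁.trans hδ
  have hlt : δ₁ * η₁ < δ₂ * η₂ :=
    lt_trans (mul_lt_mul_of_pos_right hδ hη₁pos) (mul_lt_mul_of_pos_left h hδ₂pos)
  have hU12 : U (δ₁ * η₁) ≤ U (δ₂ * η₂) :=
    le_of_lt (hUm (Set.mem_Ioi.2 (mul_pos hδ₁ hη₁pos))
      (Set.mem_Ioi.2 (mul_pos hδ₂pos hη₂pos)) hlt)
  have hI1 : Integrable (fun ω => max (U (δ₁ * η₁) - U (Y ω)) 0) μ :=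
    ((integrable_const _).sub hInt).pos_part
  have hI2 : Integrable (fun ω => max (U (δ₂ * η₂) - U (Y ω)) 0) μ :=
    ((integrable_const _).sub hInt).pos_part
  have hmono : (∫ ω, max (U (δ₁ * η₁) - U (Y ω)) 0 ∂μ)
      ≤ ∫ ω, max (U (δ₂ * η₂) - U (Y ω)) 0 ∂μ := by
    refine integral_mono hI1 hI2 fun ω => ?_
    exact max_le_max (by linarith) le_rfl
  have hUge : U η₂ ≤ U η₁ := by
    rw [hη₁, hη₂]
    have := mul_le_mul_of_nonneg_left hmono hβ.le
    linarith
  exact absurd (hUm (Set.mem_Ioi.2 hη₁pos) (Set.mem_Ioi.2 hη₂pos) h) (not_lt.2 hUge)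
end

section
/- Fix a strictly positive random variable $Y$ with $\mathbb{E}[|U(Y)|]<\infty$, where $U$ is continuous and strictly increasing, and fix $\delta>0$. For $0<\beta_1<\beta_2$, the GDA values satisfy $\eta(Y,\delta,\beta_1)\ge \eta(Y,\delta,\beta_2)$, where $\eta(Y,\delta,\beta)$ is the unique solution of $U(\eta)=\mathbb{E}[U(Y)]-\beta\,\mathbb{E}[(U(\delta\eta)-U(Y))_+]$. -/
open MeasureTheory

/-- The GDA value decreases as the disappointment-aversion parameter `β` increases. -/
theorem gda_value_antitone_in_beta
    {Ω : Type*} [MeasurableSpace Ω] (μ : Measure Ω) [IsProbabilityMeasure μ]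
    (U : ℝ → ℝ) (hUc : ContinuousOn U (Set.Ioi 0)) (hUm : StrictMonoOn U (Set.Ioi 0))
    (δ β₁ β₂ : ℝ) (hδ : 0 < δ) (hβ₁ : 0 < β₁) (hβ : β₁ < β₂)
    (Y : Ω → ℝ) (hYmeas : Measurable Y) (hYpos : ∀ ω, 0 < Y ω)
    (hInt : Integrable (fun ω => U (Y ω)) μ)
    (η₁ η₂ : ℝ) (hη₁pos : 0 < η₁) (hη₂pos : 0 < η₂)
    (hη₁ : U η₁ = (∫ ω, U (Y ω) ∂μ) - β₁ * ∫ ω, max (U (δ * η₁) - U (Y ω)) 0 ∂μ)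
    (hη₂ : U η₂ = (∫ ω, U (Y ω) ∂μ) - β₂ * ∫ ω, max (U (δ * η₂) - U (Y ω)) 0 ∂μ) :
    η₁ ≥ η₂ := by
  by_contra h
  push_neg at h
  have hlt : U η₁ < U η₂ := hUm hη₁pos hη₂pos h
  have hI1 : Integrable (fun ω => max (U (δ * η₁) - U (Y ω)) 0) μ :=
    (((integrable_const (U (δ * η₁))).sub hInt).pos_part)
  have hI2 : Integrable (fun ω => max (U (δ * η₂) - U (Y ω)) 0) μ :=
    (((integrable_const (U (δ * η₂))).sub hInt).pos_part)
  have hc : U (δ * η₁) ≤ U (δ * η₂) :=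
    (hUm (mul_pos hδ hη₁pos) (mul_pos hδ hη₂pos) (by nlinarith)).le
  have hmono : ∫ ω, max (U (δ * η₁) - U (Y ω)) 0 ∂μ ≤
      ∫ ω, max (U (δ * η₂) - U (Y ω)) 0 ∂μ := by
    refine integral_mono hI1 hI2 fun ω => ?_
    exact max_le_max (by linarith) le_rfl
  have hnn : 0 ≤ ∫ ω, max (U (δ * η₁) - U (Y ω)) 0 ∂μ :=
    integral_nonneg fun ω => le_max_right _ _
  have : β₁ * ∫ ω, max (U (δ * η₁) - U (Y ω)) 0 ∂μ ≤
      β₂ * ∫ ω, max (U (δ * η₂) - U (Y ω)) 0 ∂μ :=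
    mul_le_mul hβ.le hmono hnn (by linarith)
  linarith
end

section
/- Fix a strictly positive random variable $Y$ with $\mathbb{E}[|U(Y)|]<\infty$, $U$ continuous and strictly increasing, $\beta>0$, and $1\le\delta_1<\delta_2$. Write $\eta_i=\eta(Y,\delta_i,\beta)$ for the GDA values. Then $\delta_1\eta_1\le \delta_2\eta_2$, i.e., the disappointment benchmark level is nondecreasing in $\delta$. -/
open MeasureTheory

/-- For `1 ≤ δ₁ < δ₂`, the disappointment benchmark `δ * η(Y, δ, β)` is nondecreasing
in `δ`. -/
theorem gda_benchmark_monotone_in_delta_ge_one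
    {Ω : Type*} [MeasurableSpace Ω] (μ : Measure Ω) [IsProbabilityMeasure μ]
    (U : ℝ → ℝ) (hUc : ContinuousOn U (Set.Ioi 0)) (hUm : StrictMonoOn U (Set.Ioi 0))
    (β δ₁ δ₂ : ℝ) (hβ : 0 < β) (hδ₁ : 1 ≤ δ₁) (hδ : δ₁ < δ₂)
    (Y : Ω → ℝ) (hYmeas : Measurable Y) (hYpos : ∀ ω, 0 < Y ω)
    (hInt : Integrable (fun ω => U (Y ω)) μ)
    (η₁ η₂ : ℝ) (hη₁pos : 0 < η₁) (hη₂pos : 0 < η₂)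
    (hη₁ : U η₁ = (∫ ω, U (Y ω) ∂μ) - β * ∫ ω, max (U (δ₁ * η₁) - U (Y ω)) 0 ∂μ)
    (hη₂ : U η₂ = (∫ ω, U (Y ω) ∂μ) - β * ∫ ω, max (U (δ₂ * η₂) - U (Y ω)) 0 ∂μ) :
    δ₁ * η₁ ≤ δ₂ * η₂ := by
  by_contra hlt
  push_neg at hlt
  have hδ₁pos : (0:ℝ) < δ₁ := lt_of_lt_of_le one_pos hδ₁
  have hδ₂pos : (0:ℝ) < δ₂ := lt_trans hδ₁pos hδ
  have hb₁pos : 0 < δ₁ * η₁ := mul_pos hδ₁pos hη₁pos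
  have hb₂pos : 0 < δ₂ * η₂ := mul_pos hδ₂pos hη₂pos
  have hUb : U (δ₂ * η₂) < U (δ₁ * η₁) := hUm hb₂pos hb₁pos hlt
  have hI₁ : Integrable (fun ω => max (U (δ₁ * η₁) - U (Y ω)) 0) μ :=
    ((integrable_const _).sub hInt).pos_part
  have hI₂ : Integrable (fun ω => max (U (δ₂ * η₂) - U (Y ω)) 0) μ :=
    ((integrable_const _).sub hInt).pos_part
  have hmono : (∫ ω, max (U (δ₂ * η₂) - U (Y ω)) 0 ∂μ)
      ≤ ∫ ω, max (U (δ₁ * η₁) - U (Y ω)) 0 ∂μ := by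
    refine integral_mono hI₂ hI₁ fun ω => ?_
    exact max_le_max (by linarith) le_rfl
  have hη₁η₂ : U η₁ ≤ U η₂ := by
    rw [hη₁, hη₂]
    nlinarith
  have hηle : η₁ ≤ η₂ := by
    by_contra h
    push_neg at h
    exact absurd (hUm hη₂pos hη₁pos h) (not_lt.mpr hη₁η₂)
  have : δ₁ * η₁ < δ₂ * η₂ :=
    lt_of_le_of_lt (mul_le_mul_of_nonneg_left hηle hδ₁pos.le)
      (mul_lt_mul_of_pos_right hδ hη₂pos)
  linarith
end

section
/- Let $U$ be continuous, strictly increasing, $\beta>0$, $\delta>1$, and $Y$ a strictly positive random variable with $\mathbb{E}[|U(Y)|]<\infty$. Define the certainty equivalent $C(Y,\delta,\beta)=\varphi(\eta(Y,\delta,\beta))$ where $\varphi(w)=U^{-1}\big(\frac{U(w)+\beta U(\delta w)}{1+\beta}\big)$ and $\eta$ is the GDA value. Then for $1\le\delta_1<\delta_2$, $C(Y,\delta_1,\beta)\le C(Y,\delta_2,\beta)$. -/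
open MeasureTheory Set

/-!
Write `a = δη` for the point at which the GDA penalty is evaluated and
`g(c) = 𝔼[(c - U(Y))₊]`, which is nondecreasing. If `δ₂η₂ < δ₁η₁`, then the penalty for `δ₂`
is smaller, so `η₁ ≤ η₂` and hence `δ₁η₁ ≤ δ₂η₂`, a contradiction; thus `δ₁η₁ ≤ δ₂η₂`.
Substituting the defining equation of `η` gives
`(1 + β) U(C) = 𝔼[U(Y)] + β 𝔼[min(U(Y), U(a))]`, which is nondecreasing in `a`.
-/

section ShortfallIntegral

variable {Ω : Type*} [MeasurableSpace Ω] {μ : Measure Ω} {X : Ω → ℝ}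

lemma integrable_max_const_sub_zero [IsFiniteMeasure μ] (hX : Integrable X μ) (c : ℝ) :
    Integrable (fun ω => max (c - X ω) 0) μ :=
  ((integrable_const c).sub hX).pos_part

lemma monotone_integral_max_const_sub_zero [IsFiniteMeasure μ] (hX : Integrable X μ) :
    Monotone fun c => ∫ ω, max (c - X ω) 0 ∂μ := fun _ _ hcd =>
  integral_mono (integrable_max_const_sub_zero hX _) (integrable_max_const_sub_zero hX _)
    fun _ => max_le_max (sub_le_sub_right hcd _) le_rfl

lemma integral_min_const_eq_sub_integral_max [IsProbabilityMeasure μ] (hX : Integrable X μ)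
    (c : ℝ) : ∫ ω, min (X ω) c ∂μ = c - ∫ ω, max (c - X ω) 0 ∂μ := by
  have hpt : (fun ω => min (X ω) c) = fun ω => c - max (c - X ω) 0 := by
    funext ω
    rcases le_total (X ω) c with h | h
    · rw [min_eq_left h, max_eq_left (sub_nonneg.mpr h)]; ring
    · rw [min_eq_right h, max_eq_right (sub_nonpos.mpr h)]; ring
  rw [hpt, integral_sub (integrable_const c) (integrable_max_const_sub_zero hX c),
    integral_const, probReal_univ, one_smul]

lemma monotone_sub_integral_max_const_sub_zero [IsProbabilityMeasure μ] (hX : Integrable X μ) :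
    Monotone fun c => c - ∫ ω, max (c - X ω) 0 ∂μ := by
  intro c d hcd
  simp only [← integral_min_const_eq_sub_integral_max hX]
  exact integral_mono (hX.inf (integrable_const c)) (hX.inf (integrable_const d))
    fun ω => min_le_min le_rfl hcd

end ShortfallIntegral

lemma delta_mul_eta_le_of_gda_eq {U g : ℝ → ℝ} (hU : StrictMonoOn U (Ioi 0))
    (hg : Monotone g) {m β δ₁ δ₂ η₁ η₂ : ℝ} (hβ : 0 ≤ β) (hδ₁ : 0 < δ₁) (hδ : δ₁ ≤ δ₂)
    (hη₁ : 0 < η₁) (hη₂ : 0 < η₂)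
    (h₁ : U η₁ = m - β * g (U (δ₁ * η₁))) (h₂ : U η₂ = m - β * g (U (δ₂ * η₂))) :
    δ₁ * η₁ ≤ δ₂ * η₂ := by
  have ha₁ : 0 < δ₁ * η₁ := mul_pos hδ₁ hη₁
  have ha₂ : 0 < δ₂ * η₂ := mul_pos (hδ₁.trans_le hδ) hη₂
  by_contra! hlt
  have hUa : U (δ₂ * η₂) ≤ U (δ₁ * η₁) := (hU.le_iff_le ha₂ ha₁).mpr hlt.le
  have hUη : U η₁ ≤ U η₂ := by
    rw [h₁, h₂]
    linarith [mul_le_mul_of_nonneg_left (hg hUa) hβ]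
  have hη : η₁ ≤ η₂ := (hU.le_iff_le hη₁ hη₂).mp hUη
  exact hlt.not_ge (mul_le_mul hδ hη hη₁.le (hδ₁.le.trans hδ))

theorem gda_certainty_equivalent_monotone_in_delta_ge_one_general
    {Ω : Type*} [MeasurableSpace Ω] (μ : Measure Ω) [IsProbabilityMeasure μ]
    (U : ℝ → ℝ) (hUm : StrictMonoOn U (Set.Ioi 0))
    (β δ₁ δ₂ : ℝ) (hβ : 0 < β) (hδ₁ : 1 ≤ δ₁) (hδ : δ₁ < δ₂)
    (Y : Ω → ℝ)
    (hInt : Integrable (fun ω => U (Y ω)) μ)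
    (η₁ η₂ C₁ C₂ : ℝ) (hη₁pos : 0 < η₁) (hη₂pos : 0 < η₂)
    (hC₁pos : 0 < C₁) (hC₂pos : 0 < C₂)
    (hη₁ : U η₁ = (∫ ω, U (Y ω) ∂μ) - β * ∫ ω, max (U (δ₁ * η₁) - U (Y ω)) 0 ∂μ)
    (hη₂ : U η₂ = (∫ ω, U (Y ω) ∂μ) - β * ∫ ω, max (U (δ₂ * η₂) - U (Y ω)) 0 ∂μ)
    (hC₁ : U C₁ = (U η₁ + β * U (δ₁ * η₁)) / (1 + β))
    (hC₂ : U C₂ = (U η₂ + β * U (δ₂ * η₂)) / (1 + β)) :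
    C₁ ≤ C₂ := by
  have hδ₁pos : 0 < δ₁ := one_pos.trans_le hδ₁
  have ha : δ₁ * η₁ ≤ δ₂ * η₂ :=
    delta_mul_eta_le_of_gda_eq hUm (monotone_integral_max_const_sub_zero hInt) hβ.le
      hδ₁pos hδ.le hη₁pos hη₂pos hη₁ hη₂
  have hUa : U (δ₁ * η₁) ≤ U (δ₂ * η₂) :=
    (hUm.le_iff_le (mul_pos hδ₁pos hη₁pos) (mul_pos (hδ₁pos.trans hδ) hη₂pos)).mpr ha
  have hnum : U η₁ + β * U (δ₁ * η₁) ≤ U η₂ + β * U (δ₂ * η₂) := by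
    rw [hη₁, hη₂]
    linarith [mul_le_mul_of_nonneg_left (monotone_sub_integral_max_const_sub_zero hInt hUa) hβ.le]
  have hUC : U C₁ ≤ U C₂ := by
    rw [hC₁, hC₂]
    gcongr
  exact (hUm.le_iff_le hC₁pos hC₂pos).mp hUC

/-- The GDA certainty equivalent `C(Y, δ, β) = φ(η(Y, δ, β))`, where
`U(φ(w)) = (U(w) + β U(δ w)) / (1 + β)`, is nondecreasing in `δ` on `[1, ∞)`. -/
theorem gda_certainty_equivalent_monotone_in_delta_ge_one
    {Ω : Type*} [MeasurableSpace Ω] (μ : Measure Ω) [IsProbabilityMeasure μ]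
    (U : ℝ → ℝ) (hUc : ContinuousOn U (Set.Ioi 0)) (hUm : StrictMonoOn U (Set.Ioi 0))
    (β δ₁ δ₂ : ℝ) (hβ : 0 < β) (hδ₁ : 1 ≤ δ₁) (hδ : δ₁ < δ₂)
    (Y : Ω → ℝ) (hYmeas : Measurable Y) (hYpos : ∀ ω, 0 < Y ω)
    (hInt : Integrable (fun ω => U (Y ω)) μ)
    (η₁ η₂ C₁ C₂ : ℝ) (hη₁pos : 0 < η₁) (hη₂pos : 0 < η₂)
    (hC₁pos : 0 < C₁) (hC₂pos : 0 < C₂)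
    (hη₁ : U η₁ = (∫ ω, U (Y ω) ∂μ) - β * ∫ ω, max (U (δ₁ * η₁) - U (Y ω)) 0 ∂μ)
    (hη₂ : U η₂ = (∫ ω, U (Y ω) ∂μ) - β * ∫ ω, max (U (δ₂ * η₂) - U (Y ω)) 0 ∂μ)
    (hC₁ : U C₁ = (U η₁ + β * U (δ₁ * η₁)) / (1 + β))
    (hC₂ : U C₂ = (U η₂ + β * U (δ₂ * η₂)) / (1 + β)) :
    C₁ ≤ C₂ :=
  gda_certainty_equivalent_monotone_in_delta_ge_one_general μ U hUm β δ₁ δ₂ hβ hδ₁ hδ Y hInt η₁ η₂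
    C₁ C₂ hη₁pos hη₂pos hC₁pos hC₂pos hη₁ hη₂ hC₁ hC₂
end

section
/- Let $T>0$, $d\ge1$, and $\lambda\in L^\infty((0,T);\mathbb{R}^d)$. Let $m:[0,\infty)^2\to(0,\infty)$ be bounded (by some $C_0$) and locally Lipschitz continuous. Then the integral equation $a_t=m\big(\sqrt{\int_t^T|a_s|^2\,ds},\ \int_t^T a_s^\top\lambda(s)\,ds\big)\,\lambda(t)$, $t\in[0,T)$, has a unique solution $a\in L^\infty((0,T);\mathbb{R}^d)$. -/
/-!
Any solution is bounded by `C₀ Λ` on `[0, T)`, where `Λ` bounds `λ`, so the pair of tail integrals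
`(x_t, y_t) = (√(∫_t^T |a|²), ∫_t^T a·λ)` stays in a fixed compact rectangle, on which the locally
Lipschitz `m` is `K`-Lipschitz. Instead of contracting on short intervals `[T - ε, T)` and patching,
we use the weight `e^{β(T-t)}` (a Bielecki norm): if `|a - b| ≤ c e^{β(T-s)}`, then
`|√∫_t^T|a|² - √∫_t^T|b|²| ≤ √∫_t^T|a - b|² ≤ c e^{β(T-t)} / √(2β)` and
`|∫_t^T (a - b)·λ| ≤ Λ c e^{β(T-t)} / β`, so the map `a ↦ m(x_t, y_t) λ(t)` contracts by the factor
`K Λ (1/√(2β) + Λ/β)`, which is `< 1` for large `β`. Picard iteration then converges pointwise to a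
solution, and the same estimate forces any two solutions to coincide.
-/

open MeasureTheory Set Filter Topology

section WeightedContraction

variable {α E : Type*} [NormedAddCommGroup E]

/-- `Φ` is a `q`-contraction on `s` for the weighted sup norm `‖a‖_w = sup_x ‖a x‖ / w x`, phrased
without forming that norm. -/
structure IsWeightedContraction (s : Set (α → E)) (Φ : (α → E) → α → E) (w : α → ℝ) (q : ℝ) :
    Prop where
  mapsTo : MapsTo Φ s s
  norm_sub_le : ∀ ⦃a⦄, a ∈ s → ∀ ⦃b⦄, b ∈ s → ∀ ⦃c : ℝ⦄, 0 ≤ c →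
    (∀ x, ‖a x - b x‖ ≤ c * w x) → ∀ x, ‖Φ a x - Φ b x‖ ≤ q * c * w x

namespace IsWeightedContraction

variable {s : Set (α → E)} {Φ : (α → E) → α → E} {w : α → ℝ} {q c : ℝ} {a b : α → E}

theorem norm_iterate_sub_le (h : IsWeightedContraction s Φ w q) (hq : 0 ≤ q) (ha : a ∈ s)
    (hb : b ∈ s) (hc : 0 ≤ c) (hab : ∀ x, ‖a x - b x‖ ≤ c * w x) (n : ℕ) (x : α) :
    ‖Φ^[n] a x - Φ^[n] b x‖ ≤ q ^ n * c * w x := by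
  induction n generalizing x with
  | zero => simpa using hab x
  | succ n ih =>
    rw [Function.iterate_succ_apply', Function.iterate_succ_apply', pow_succ', mul_assoc q]
    exact h.norm_sub_le (h.mapsTo.iterate n ha) (h.mapsTo.iterate n hb)
      (by positivity) ih x

theorem eq_of_isFixedPt (h : IsWeightedContraction s Φ w q) (hq₀ : 0 ≤ q) (hq₁ : q < 1)
    (ha : a ∈ s) (hb : b ∈ s) (hc : 0 ≤ c) (hab : ∀ x, ‖a x - b x‖ ≤ c * w x)
    (hfa : Φ a = a) (hfb : Φ b = b) : a = b := by
  funext x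
  have hlim : Tendsto (fun n : ℕ => q ^ n * c * w x) atTop (𝓝 0) := by
    simpa using ((tendsto_pow_atTop_nhds_zero_of_lt_one hq₀ hq₁).mul_const c).mul_const (w x)
  have hle : ∀ n : ℕ, ‖a x - b x‖ ≤ q ^ n * c * w x := fun n => by
    simpa only [Function.iterate_fixed hfa, Function.iterate_fixed hfb] using
      h.norm_iterate_sub_le hq₀ ha hb hc hab n x
  exact sub_eq_zero.1 (norm_le_zero_iff.1 (ge_of_tendsto' hlim hle))

theorem exists_isFixedPt [CompleteSpace E] (h : IsWeightedContraction s Φ w q) (hq₀ : 0 ≤ q)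
    (hq₁ : q < 1) (hs : IsSeqClosed s) {a₀ : α → E} (ha₀ : a₀ ∈ s) (hc : 0 ≤ c)
    (h₀ : ∀ x, ‖Φ a₀ x - a₀ x‖ ≤ c * w x) : ∃ a ∈ s, Φ a = a := by
  set u : ℕ → α → E := fun n => Φ^[n] a₀
  have hu : ∀ n, u n ∈ s := fun n => h.mapsTo.iterate n ha₀
  have hstep : ∀ x n, dist (u n x) (u (n + 1) x) ≤ c * w x * q ^ n := fun x n => by
    rw [dist_comm, dist_eq_norm]
    simp only [u, Function.iterate_succ_apply]
    exact (h.norm_iterate_sub_le hq₀ (h.mapsTo ha₀) ha₀ hc h₀ n x).trans_eq (by ring)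
  choose a ha using fun x => cauchySeq_tendsto_of_complete
    (cauchySeq_of_le_geometric q (c * w x) hq₁ (hstep x))
  have has : a ∈ s := hs hu (tendsto_pi_nhds.2 ha)
  refine ⟨a, has, funext fun x => tendsto_nhds_unique ?_ ((ha x).comp (tendsto_add_atTop_nat 1))⟩
  have hdist : ∀ n x, ‖u n x - a x‖ ≤ c * q ^ n / (1 - q) * w x := fun n x => by
    rw [← dist_eq_norm, div_mul_eq_mul_div, mul_right_comm]
    exact dist_le_of_le_geometric_of_tendsto q _ hq₁ (hstep x) (ha x) n
  have hlim : Tendsto (fun n : ℕ => q * (c * q ^ n / (1 - q)) * w x) atTop (𝓝 0) := by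
    have := (tendsto_pow_atTop_nhds_zero_of_lt_one hq₀ hq₁).const_mul (q * c / (1 - q) * w x)
    simp only [mul_zero] at this
    exact this.congr fun n => by ring
  refine tendsto_iff_norm_sub_tendsto_zero.2 (squeeze_zero (fun _ => norm_nonneg _)
    (fun n => ?_) hlim)
  simp only [Function.comp_apply, u, Function.iterate_succ_apply']
  exact h.norm_sub_le (hu n) has
    (div_nonneg (mul_nonneg hc (pow_nonneg hq₀ n)) (sub_nonneg.2 hq₁.le)) (hdist n) x

end IsWeightedContraction

end WeightedContraction

section Integrals

variable {α E : Type*} [MeasurableSpace α] {μ : Measure α} [NormedAddCommGroup E]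

theorem MeasureTheory.MemLp.norm_toLp_two {f : α → E} (hf : MemLp f 2 μ) :
    ‖hf.toLp f‖ = √(∫ x, ‖f x‖ ^ 2 ∂μ) := by
  rw [Lp.norm_toLp, hf.eLpNorm_eq_integral_rpow_norm two_ne_zero ENNReal.ofNat_ne_top,
    ENNReal.toReal_ofReal (by positivity), Real.sqrt_eq_rpow]
  norm_num

theorem abs_sqrt_integral_norm_sq_sub_le {f g : α → E} (hf : MemLp f 2 μ) (hg : MemLp g 2 μ) :
    |√(∫ x, ‖f x‖ ^ 2 ∂μ) - √(∫ x, ‖g x‖ ^ 2 ∂μ)| ≤ √(∫ x, ‖f x - g x‖ ^ 2 ∂μ) := by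
  rw [← hf.norm_toLp_two, ← hg.norm_toLp_two]
  convert abs_norm_sub_norm_le (hf.toLp f) (hg.toLp g)
  rw [← MemLp.toLp_sub, (hf.sub hg).norm_toLp_two, Pi.sub_def]

theorem norm_setIntegral_le_of_support_subset [NormedSpace ℝ E] {f : α → E} {s : Set α} {C : ℝ}
    (hs : MeasurableSet s) (hμs : μ s ≠ ⊤) (hfs : Function.support f ⊆ s) (hC₀ : 0 ≤ C)
    (hC : ∀ x, ‖f x‖ ≤ C) (u : Set α) : ‖∫ x in u, f x ∂μ‖ ≤ C * μ.real s := by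
  rw [← indicator_eq_self.2 hfs, setIntegral_indicator hs]
  calc ‖∫ x in u ∩ s, f x ∂μ‖ ≤ C * μ.real (u ∩ s) :=
        norm_setIntegral_le_of_norm_le_const
          ((measure_mono inter_subset_right).trans_lt hμs.lt_top) fun x _ => hC x
    _ ≤ C * μ.real s := by gcongr; exact inter_subset_right

end Integrals

section TailIntegrals

variable {E : Type*} [NormedAddCommGroup E] [NormedSpace ℝ E]

theorem setIntegral_Ioc_eq_intervalIntegral_min (f : ℝ → E) (t T : ℝ) :
    ∫ s in Ioc t T, f s = ∫ s in min t T..T, f s := by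
  rw [intervalIntegral.integral_of_le (min_le_right t T)]
  rcases le_total t T with h | h
  · rw [min_eq_left h]
  · rw [min_eq_right h, Ioc_self, Ioc_eq_empty h.not_gt]

theorem continuous_setIntegral_Ioc {f : ℝ → E} (hf : ∀ a b, IntervalIntegrable f volume a b)
    (T : ℝ) : Continuous fun t => ∫ s in Ioc t T, f s := by
  simp only [setIntegral_Ioc_eq_intervalIntegral_min]
  convert ((intervalIntegral.continuous_primitive hf T).comp
    (continuous_id.min continuous_const)).neg using 2 with t
  exact intervalIntegral.integral_symm _ _

end TailIntegrals

theorem integrableOn_Ioc_of_norm_le {F : Type*} [NormedAddCommGroup F] {f : ℝ → F} {C : ℝ}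
    (hf : AEStronglyMeasurable f) (hC : ∀ s, ‖f s‖ ≤ C) (t T : ℝ) : IntegrableOn f (Ioc t T) :=
  Integrable.of_bound hf.restrict C (ae_of_all _ hC)

theorem intervalIntegrable_of_norm_le {F : Type*} [NormedAddCommGroup F] {f : ℝ → F} {C : ℝ}
    (hf : AEStronglyMeasurable f) (hC : ∀ s, ‖f s‖ ≤ C) (t T : ℝ) :
    IntervalIntegrable f volume t T :=
  ⟨integrableOn_Ioc_of_norm_le hf hC t T, integrableOn_Ioc_of_norm_le hf hC T t⟩

theorem setIntegral_Ioc_exp_le {β : ℝ} (hβ : 0 < β) (t T : ℝ) :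
    ∫ s in Ioc t T, Real.exp (β * (T - s)) ≤ Real.exp (β * (T - t)) / β := by
  rcases le_or_gt t T with h | h
  · rw [← intervalIntegral.integral_of_le h]
    have hsub : ∫ s in t..T, Real.exp (β * (T - s)) = (Real.exp (β * (T - t)) - 1) / β := by
      rw [intervalIntegral.integral_comp_sub_left (fun u => Real.exp (β * u)),
        intervalIntegral.integral_comp_mul_left Real.exp hβ.ne', integral_exp]
      simp [div_eq_inv_mul]
    rw [hsub]
    gcongr
    linarith
  · rw [Ioc_eq_empty h.not_gt, Measure.restrict_empty, integral_zero_measure]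
    positivity

theorem setIntegral_Ioc_le_of_le_mul_exp {f : ℝ → ℝ} {t T β c : ℝ} (hβ : 0 < β) (hc : 0 ≤ c)
    (hf : IntegrableOn f (Ioc t T)) (hfc : ∀ s, f s ≤ c * Real.exp (β * (T - s))) :
    ∫ s in Ioc t T, f s ≤ c * Real.exp (β * (T - t)) / β := by
  calc ∫ s in Ioc t T, f s ≤ ∫ s in Ioc t T, c * Real.exp (β * (T - s)) :=
        setIntegral_mono_on hf (by fun_prop : Continuous _).integrableOn_Ioc measurableSet_Ioc
          fun s _ => hfc s
    _ = c * ∫ s in Ioc t T, Real.exp (β * (T - s)) := integral_const_mul c _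
    _ ≤ c * Real.exp (β * (T - t)) / β := by
        rw [mul_div_assoc]; exact mul_le_mul_of_nonneg_left (setIntegral_Ioc_exp_le hβ t T) hc

theorem tendsto_contractionFactor (A B : ℝ) :
    Tendsto (fun β : ℝ => A * (1 / √(2 * β) + B / β)) atTop (𝓝 0) := by
  have h₁ : Tendsto (fun β : ℝ => 1 / √(2 * β)) atTop (𝓝 0) := tendsto_const_nhds.div_atTop
    (Real.tendsto_sqrt_atTop.comp (tendsto_id.const_mul_atTop two_pos))
  have h₂ : Tendsto (fun β : ℝ => B / β) atTop (𝓝 0) := tendsto_const_nhds.div_atTop tendsto_id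
  simpa using (h₁.add h₂).const_mul A

noncomputable section EquilibriumMap

variable {E : Type*} [NormedAddCommGroup E] [InnerProductSpace ℝ E]

def tailNorm (T : ℝ) (a : ℝ → E) (t : ℝ) : ℝ := √(∫ s in Ioc t T, ‖a s‖ ^ 2)

def tailInner (T : ℝ) (lam a : ℝ → E) (t : ℝ) : ℝ := ∫ s in Ioc t T, (inner ℝ (a s) (lam s) : ℝ)

-- Cut off outside `[0, T)`, where the equation imposes nothing.
def equilibriumMap (T : ℝ) (lam : ℝ → E) (m : ℝ → ℝ → ℝ) (a : ℝ → E) : ℝ → E :=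
  (Ico 0 T).indicator fun t => m (tailNorm T a t) (tailInner T lam a t) • lam t

def IsEquilibrium (T : ℝ) (lam : ℝ → E) (m : ℝ → ℝ → ℝ) (a : ℝ → E) : Prop :=
  ∀ t ∈ Ico 0 T, a t = m (tailNorm T a t) (tailInner T lam a t) • lam t

variable {T Λ C₀ : ℝ} {lam a b : ℝ → E} {m : ℝ → ℝ → ℝ}

theorem norm_equilibriumMap_le (hΛ : ∀ t, ‖lam t‖ ≤ Λ) (hm : ∀ x y, 0 ≤ x → |m x y| ≤ C₀)
    (a : ℝ → E) (t : ℝ) : ‖equilibriumMap T lam m a t‖ ≤ C₀ * Λ := by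
  have hΛ₀ : 0 ≤ Λ := (norm_nonneg _).trans (hΛ 0)
  have hC₀ : 0 ≤ C₀ := (abs_nonneg _).trans (hm 0 0 le_rfl)
  unfold equilibriumMap
  by_cases ht : t ∈ Ico 0 T
  · rw [indicator_of_mem ht, norm_smul, Real.norm_eq_abs]
    exact mul_le_mul (hm _ _ (Real.sqrt_nonneg _)) (hΛ t) (norm_nonneg _) hC₀
  · rw [indicator_of_notMem ht, norm_zero]
    positivity

theorem support_equilibriumMap_subset (a : ℝ → E) :
    Function.support (equilibriumMap T lam m a) ⊆ Ico 0 T :=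
  support_indicator_subset

theorem equilibriumMap_congr (h : EqOn a b (Ico 0 T)) :
    equilibriumMap T lam m a = equilibriumMap T lam m b := by
  refine indicator_congr fun t ht => ?_
  have hIoo : EqOn a b (Ioo t T) := fun s hs => h ⟨ht.1.trans hs.1.le, hs.2⟩
  have hx : ∫ s in Ioo t T, ‖a s‖ ^ 2 = ∫ s in Ioo t T, ‖b s‖ ^ 2 :=
    setIntegral_congr_fun measurableSet_Ioo fun s hs => by simp only [hIoo hs]
  have hy : ∫ s in Ioo t T, (inner ℝ (a s) (lam s) : ℝ) = ∫ s in Ioo t T, inner ℝ (b s) (lam s) :=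
    setIntegral_congr_fun measurableSet_Ioo fun s hs => by simp only [hIoo hs]
  simp only [tailNorm, tailInner, integral_Ioc_eq_integral_Ioo, hx, hy]

theorem isEquilibrium_of_isFixedPt (h : equilibriumMap T lam m a = a) : IsEquilibrium T lam m a :=
  fun t ht => (congrFun h t).symm.trans (indicator_of_mem ht _)

theorem IsEquilibrium.indicator_eq (h : IsEquilibrium T lam m a) :
    (Ico 0 T).indicator a = equilibriumMap T lam m a :=
  indicator_congr h

theorem IsEquilibrium.isFixedPt_indicator (h : IsEquilibrium T lam m a) :
    equilibriumMap T lam m ((Ico 0 T).indicator a) = (Ico 0 T).indicator a := by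
  rw [equilibriumMap_congr fun t ht => indicator_of_mem ht a, h.indicator_eq]

end EquilibriumMap

section Admissible

variable {E : Type*} [NormedAddCommGroup E] [MeasurableSpace E]

def admissible (T M : ℝ) : Set (ℝ → E) :=
  {a | Measurable a ∧ (∀ t, ‖a t‖ ≤ M) ∧ Function.support a ⊆ Ico 0 T}

def tailRect (T M Λ : ℝ) : Set (ℝ × ℝ) :=
  Icc 0 (√(M ^ 2 * volume.real (Ico 0 T))) ×ˢ Icc (-(M * Λ * volume.real (Ico 0 T)))
    (M * Λ * volume.real (Ico 0 T))

theorem exists_lipschitzOnWith_tailRect {f : ℝ × ℝ → ℝ}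
    (hf : ∀ p : ℝ × ℝ, 0 ≤ p.1 → ∃ K : NNReal, ∃ s ∈ 𝓝 p, LipschitzOnWith K f (s ∩ {q | 0 ≤ q.1}))
    (T M Λ : ℝ) : ∃ K, LipschitzOnWith K f (tailRect T M Λ) := by
  have hloc : LocallyLipschitzOn {q : ℝ × ℝ | 0 ≤ q.1} f := fun p hp => by
    obtain ⟨K, s, hs, hK⟩ := hf p hp
    exact ⟨K, _, inter_mem_nhdsWithin _ hs, inter_comm s _ ▸ hK⟩
  exact (hloc.mono fun q hq => hq.1.1).exists_lipschitzOnWith_of_compact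
    (isCompact_Icc.prod isCompact_Icc)

variable {T M Λ C₀ β c : ℝ} {lam a b : ℝ → E} {m : ℝ → ℝ → ℝ}

theorem zero_mem_admissible (hM : 0 ≤ M) : (0 : ℝ → E) ∈ admissible T M :=
  ⟨measurable_const, fun _ => by simpa using hM, by simp⟩

theorem norm_sq_le_of_admissible (ha : a ∈ admissible T M) (s : ℝ) : ‖‖a s‖ ^ 2‖ ≤ M ^ 2 := by
  rw [norm_pow, norm_norm]
  exact pow_le_pow_left₀ (norm_nonneg _) (ha.2.1 s) 2

theorem norm_sub_le_mul_exp_of_admissible (ha : a ∈ admissible T M) (hb : b ∈ admissible T M)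
    (hβ : 0 ≤ β) (s : ℝ) : ‖a s - b s‖ ≤ 2 * M * Real.exp (β * (T - s)) := by
  by_cases hs : s ∈ Ico 0 T
  · have hw : 1 ≤ Real.exp (β * (T - s)) := Real.one_le_exp (mul_nonneg hβ (by linarith [hs.2]))
    calc ‖a s - b s‖ ≤ ‖a s‖ + ‖b s‖ := norm_sub_le _ _
      _ ≤ 2 * M := by linarith [ha.2.1 s, hb.2.1 s]
      _ ≤ 2 * M * Real.exp (β * (T - s)) :=
        le_mul_of_one_le_right (by linarith [(norm_nonneg _).trans (ha.2.1 s)]) hw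
  · rw [Function.notMem_support.1 (mt (@ha.2.2 s) hs),
      Function.notMem_support.1 (mt (@hb.2.2 s) hs), sub_zero, norm_zero]
    have hM : 0 ≤ M := (norm_nonneg _).trans (ha.2.1 s)
    positivity

theorem isSeqClosed_admissible [BorelSpace E] : IsSeqClosed (admissible (E := E) T M) := by
  intro u a hu hua
  have hlim := tendsto_pi_nhds.1 hua
  refine ⟨measurable_of_tendsto_metrizable (fun n => (hu n).1) hua,
    fun t => le_of_tendsto' (hlim t).norm fun n => (hu n).2.1 t, fun t ht => ?_⟩
  by_contra hout
  refine ht (tendsto_nhds_unique (hlim t) ?_)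
  simp [Function.notMem_support.1 fun h => hout ((hu _).2.2 h)]

theorem abs_tailNorm_sub_le [BorelSpace E] [SecondCountableTopology E]
    (ha : a ∈ admissible T M) (hb : b ∈ admissible T M) (hβ : 0 < β) (hc : 0 ≤ c)
    (hab : ∀ s, ‖a s - b s‖ ≤ c * Real.exp (β * (T - s))) (t : ℝ) :
    |tailNorm T a t - tailNorm T b t| ≤ c * Real.exp (β * (T - t)) / √(2 * β) := by
  have hA : MemLp a 2 (volume.restrict (Ioc t T)) :=
    MemLp.of_bound ha.1.aestronglyMeasurable M (ae_of_all _ ha.2.1)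
  have hB : MemLp b 2 (volume.restrict (Ioc t T)) :=
    MemLp.of_bound hb.1.aestronglyMeasurable M (ae_of_all _ hb.2.1)
  have hsq : ∀ x, (c * Real.exp (β * x)) ^ 2 = c ^ 2 * Real.exp (2 * β * x) := fun x => by
    rw [mul_pow, sq (Real.exp _), ← Real.exp_add]; ring_nf
  calc |tailNorm T a t - tailNorm T b t| ≤ √(∫ s in Ioc t T, ‖a s - b s‖ ^ 2) :=
        abs_sqrt_integral_norm_sq_sub_le hA hB
    _ ≤ √(c ^ 2 * Real.exp (2 * β * (T - t)) / (2 * β)) := by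
        refine Real.sqrt_le_sqrt (setIntegral_Ioc_le_of_le_mul_exp (by positivity) (sq_nonneg c)
          ((memLp_two_iff_integrable_sq_norm (hA.sub hB).1).1 (hA.sub hB)) fun s => ?_)
        rw [← hsq]
        exact pow_le_pow_left₀ (norm_nonneg _) (hab s) 2
    _ = c * Real.exp (β * (T - t)) / √(2 * β) := by
        rw [← hsq, Real.sqrt_div' _ (by positivity), Real.sqrt_sq (by positivity)]

variable [InnerProductSpace ℝ E]

theorem IsEquilibrium.indicator_mem_admissible (h : IsEquilibrium T lam m a)
    (hΛ : ∀ t, ‖lam t‖ ≤ Λ) (hm : ∀ x y, 0 ≤ x → |m x y| ≤ C₀) (ha : Measurable a) :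
    (Ico 0 T).indicator a ∈ admissible T (C₀ * Λ) :=
  ⟨ha.indicator measurableSet_Ico, h.indicator_eq ▸ norm_equilibriumMap_le hΛ hm a,
    support_indicator_subset⟩

theorem norm_inner_le_of_admissible (ha : a ∈ admissible T M) (hΛ : ∀ t, ‖lam t‖ ≤ Λ) (s : ℝ) :
    ‖(inner ℝ (a s) (lam s) : ℝ)‖ ≤ M * Λ :=
  (norm_inner_le_norm _ _).trans
    (mul_le_mul (ha.2.1 s) (hΛ s) (norm_nonneg _) ((norm_nonneg _).trans (ha.2.1 s)))

theorem tail_mem_tailRect (ha : a ∈ admissible T M) (hΛ : ∀ t, ‖lam t‖ ≤ Λ) (t : ℝ) :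
    (tailNorm T a t, tailInner T lam a t) ∈ tailRect T M Λ := by
  have hM : 0 ≤ M := (norm_nonneg _).trans (ha.2.1 0)
  have hΛ₀ : 0 ≤ Λ := (norm_nonneg _).trans (hΛ 0)
  have hfin : volume (Ico (0 : ℝ) T) ≠ ⊤ := measure_Ico_lt_top.ne
  have hx := norm_setIntegral_le_of_support_subset measurableSet_Ico hfin
    (fun s hs => ha.2.2 fun h => hs (by simp [h])) (sq_nonneg M) (norm_sq_le_of_admissible ha)
    (Ioc t T)
  have hy := norm_setIntegral_le_of_support_subset measurableSet_Ico hfin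
    (fun s hs => ha.2.2 fun h => hs (by simp [h])) (mul_nonneg hM hΛ₀)
    (norm_inner_le_of_admissible ha hΛ) (Ioc t T)
  rw [Real.norm_eq_abs] at hx hy
  exact ⟨⟨Real.sqrt_nonneg _, Real.sqrt_le_sqrt (le_of_abs_le hx)⟩, abs_le.1 hy⟩

variable [BorelSpace E] [SecondCountableTopology E]

theorem continuous_tail (ha : a ∈ admissible T M) (hlam : Measurable lam)
    (hΛ : ∀ t, ‖lam t‖ ≤ Λ) : Continuous fun t => (tailNorm T a t, tailInner T lam a t) :=
  (Real.continuous_sqrt.comp (continuous_setIntegral_Ioc (intervalIntegrable_of_norm_le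
      (ha.1.norm.pow_const 2).aestronglyMeasurable (norm_sq_le_of_admissible ha)) T)).prodMk
    (continuous_setIntegral_Ioc (intervalIntegrable_of_norm_le
      (ha.1.inner (𝕜 := ℝ) hlam).aestronglyMeasurable (norm_inner_le_of_admissible ha hΛ)) T)

theorem equilibriumMap_mem_admissible (hlam : Measurable lam) (hΛ : ∀ t, ‖lam t‖ ≤ Λ)
    (hm : ∀ x y, 0 ≤ x → |m x y| ≤ C₀)
    (hmc : ContinuousOn (Function.uncurry m) (tailRect T (C₀ * Λ) Λ))
    (ha : a ∈ admissible T (C₀ * Λ)) : equilibriumMap T lam m a ∈ admissible T (C₀ * Λ) :=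
  ⟨((hmc.comp_continuous (continuous_tail ha hlam hΛ) (tail_mem_tailRect ha hΛ)).measurable.smul
      hlam).indicator measurableSet_Ico,
    norm_equilibriumMap_le hΛ hm a, support_equilibriumMap_subset a⟩

theorem abs_tailInner_sub_le (hlam : Measurable lam) (hΛ : ∀ t, ‖lam t‖ ≤ Λ)
    (ha : a ∈ admissible T M) (hb : b ∈ admissible T M) (hβ : 0 < β) (hc : 0 ≤ c)
    (hab : ∀ s, ‖a s - b s‖ ≤ c * Real.exp (β * (T - s))) (t : ℝ) :
    |tailInner T lam a t - tailInner T lam b t| ≤ Λ * c * Real.exp (β * (T - t)) / β := by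
  have hΛ₀ : 0 ≤ Λ := (norm_nonneg _).trans (hΛ 0)
  have hia := integrableOn_Ioc_of_norm_le (ha.1.inner (𝕜 := ℝ) hlam).aestronglyMeasurable
    (norm_inner_le_of_admissible ha hΛ) t T
  have hib := integrableOn_Ioc_of_norm_le (hb.1.inner (𝕜 := ℝ) hlam).aestronglyMeasurable
    (norm_inner_le_of_admissible hb hΛ) t T
  rw [tailInner, tailInner, ← integral_sub hia hib, ← Real.norm_eq_abs]
  refine (norm_integral_le_integral_norm _).trans
    (setIntegral_Ioc_le_of_le_mul_exp hβ (by positivity) (hia.sub hib).norm fun s => ?_)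
  rw [← inner_sub_left, mul_assoc, mul_comm Λ]
  exact (norm_inner_le_norm _ _).trans
    (mul_le_mul (hab s) (hΛ s) (norm_nonneg _) (by positivity))

theorem norm_equilibriumMap_sub_le (hlam : Measurable lam) (hΛ : ∀ t, ‖lam t‖ ≤ Λ) {K : NNReal}
    (hK : LipschitzOnWith K (Function.uncurry m) (tailRect T M Λ))
    (ha : a ∈ admissible T M) (hb : b ∈ admissible T M) (hβ : 0 < β) (hc : 0 ≤ c)
    (hab : ∀ s, ‖a s - b s‖ ≤ c * Real.exp (β * (T - s))) (t : ℝ) :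
    ‖equilibriumMap T lam m a t - equilibriumMap T lam m b t‖ ≤
      K * Λ * (1 / √(2 * β) + Λ / β) * c * Real.exp (β * (T - t)) := by
  have hΛ₀ : 0 ≤ Λ := (norm_nonneg _).trans (hΛ 0)
  unfold equilibriumMap
  by_cases ht : t ∈ Ico 0 T
  swap
  · rw [indicator_of_notMem ht, indicator_of_notMem ht, sub_zero, norm_zero]
    positivity
  rw [indicator_of_mem ht, indicator_of_mem ht, ← sub_smul, norm_smul, mul_comm]
  have hdist := hK.dist_le_mul _ (tail_mem_tailRect ha hΛ t) _ (tail_mem_tailRect hb hΛ t)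
  rw [Prod.dist_eq, Real.dist_eq, Real.dist_eq] at hdist
  have hm_sub := hdist.trans (mul_le_mul_of_nonneg_left
    ((max_le_add_of_nonneg (abs_nonneg _) (abs_nonneg _)).trans
      (add_le_add (abs_tailNorm_sub_le ha hb hβ hc hab t)
        (abs_tailInner_sub_le hlam hΛ ha hb hβ hc hab t))) K.2)
  calc ‖lam t‖ * _
      ≤ Λ * (K * (c * Real.exp (β * (T - t)) / √(2 * β) + Λ * c * Real.exp (β * (T - t)) / β)) :=
        mul_le_mul (hΛ t) ((Real.norm_eq_abs _).trans_le hm_sub) (norm_nonneg _) hΛ₀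
    _ = K * Λ * (1 / √(2 * β) + Λ / β) * c * Real.exp (β * (T - t)) := by ring

theorem isWeightedContraction_equilibriumMap (hlam : Measurable lam) (hΛ : ∀ t, ‖lam t‖ ≤ Λ)
    (hm : ∀ x y, 0 ≤ x → |m x y| ≤ C₀) {K : NNReal}
    (hK : LipschitzOnWith K (Function.uncurry m) (tailRect T (C₀ * Λ) Λ)) (hβ : 0 < β) :
    IsWeightedContraction (admissible T (C₀ * Λ)) (equilibriumMap T lam m)
      (fun t => Real.exp (β * (T - t))) (K * Λ * (1 / √(2 * β) + Λ / β)) :=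
  ⟨fun _ ha => equilibriumMap_mem_admissible hlam hΛ hm hK.continuousOn ha,
    fun _ ha _ hb _ hc hab => norm_equilibriumMap_sub_le hlam hΛ hK ha hb hβ hc hab⟩

end Admissible

theorem equilibrium_integral_equation_exists_unique_general
    (T : ℝ) (d : ℕ)
    (lam : ℝ → EuclideanSpace ℝ (Fin d)) (hlam_meas : Measurable lam)
    (hlam_bdd : ∃ Λ : ℝ, ∀ t : ℝ, ‖lam t‖ ≤ Λ)
    (m : ℝ → ℝ → ℝ) (C₀ : ℝ)
    (hm_pos : ∀ x y : ℝ, 0 ≤ x → 0 < m x y)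
    (hm_bdd : ∀ x y : ℝ, 0 ≤ x → m x y ≤ C₀)
    (hm_locLip : ∀ p : ℝ × ℝ, 0 ≤ p.1 → ∃ K : NNReal, ∃ s ∈ nhds p,
      LipschitzOnWith K (fun q : ℝ × ℝ => m q.1 q.2)
        (s ∩ {q : ℝ × ℝ | 0 ≤ q.1})) :
    (∃ a : ℝ → EuclideanSpace ℝ (Fin d), Measurable a ∧
      (∃ C : ℝ, ∀ t : ℝ, ‖a t‖ ≤ C) ∧
      (∀ t ∈ Set.Ico 0 T,
        a t = m (Real.sqrt (∫ s in Set.Ioc t T, ‖a s‖ ^ 2))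
                (∫ s in Set.Ioc t T, (inner ℝ (a s) (lam s) : ℝ)) • lam t)) ∧
    (∀ a b : ℝ → EuclideanSpace ℝ (Fin d),
      Measurable a → (∃ C : ℝ, ∀ t : ℝ, ‖a t‖ ≤ C) →
      (∀ t ∈ Set.Ico 0 T,
        a t = m (Real.sqrt (∫ s in Set.Ioc t T, ‖a s‖ ^ 2))
                (∫ s in Set.Ioc t T, (inner ℝ (a s) (lam s) : ℝ)) • lam t) →
      Measurable b → (∃ C : ℝ, ∀ t : ℝ, ‖b t‖ ≤ C) →
      (∀ t ∈ Set.Ico 0 T,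
        b t = m (Real.sqrt (∫ s in Set.Ioc t T, ‖b s‖ ^ 2))
                (∫ s in Set.Ioc t T, (inner ℝ (b s) (lam s) : ℝ)) • lam t) →
      ∀ t ∈ Set.Ico 0 T, a t = b t) := by
  obtain ⟨Λ, hΛ⟩ := hlam_bdd
  have hm : ∀ x y, 0 ≤ x → |m x y| ≤ C₀ := fun x y hx =>
    abs_le.2 ⟨by linarith [hm_pos x y hx, hm_bdd x y hx], hm_bdd x y hx⟩
  obtain ⟨K, hK⟩ := exists_lipschitzOnWith_tailRect hm_locLip T (C₀ * Λ) Λ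
  obtain ⟨β, hq, hβ⟩ := (((tendsto_contractionFactor (K * Λ) Λ).eventually
    (gt_mem_nhds one_pos)).and (eventually_gt_atTop 0)).exists
  have hΦ := isWeightedContraction_equilibriumMap hlam_meas hΛ hm hK hβ
  have hΛ₀ : 0 ≤ Λ := (norm_nonneg _).trans (hΛ 0)
  have hq₀ : 0 ≤ (K : ℝ) * Λ * (1 / √(2 * β) + Λ / β) := by positivity
  have hM : 0 ≤ C₀ * Λ := mul_nonneg ((abs_nonneg _).trans (hm 0 0 le_rfl)) hΛ₀
  refine ⟨?_, fun a b ha _ hfa hb _ hfb t ht => ?_⟩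
  · have h₀ := zero_mem_admissible (E := EuclideanSpace ℝ (Fin d)) (T := T) hM
    obtain ⟨a, ha, hfix⟩ := hΦ.exists_isFixedPt hq₀ hq isSeqClosed_admissible h₀
      (by positivity) (norm_sub_le_mul_exp_of_admissible (hΦ.mapsTo h₀) h₀ hβ.le)
    exact ⟨a, ha.1, ⟨_, ha.2.1⟩, isEquilibrium_of_isFixedPt hfix⟩
  · have hfa' : IsEquilibrium T lam m a := hfa
    have hfb' : IsEquilibrium T lam m b := hfb
    have ha' := hfa'.indicator_mem_admissible hΛ hm ha
    have hb' := hfb'.indicator_mem_admissible hΛ hm hb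
    have hab := hΦ.eq_of_isFixedPt hq₀ hq ha' hb' (by positivity)
      (norm_sub_le_mul_exp_of_admissible ha' hb' hβ.le) hfa'.isFixedPt_indicator
      hfb'.isFixedPt_indicator
    simpa [indicator_of_mem ht] using congrFun hab t

/-- Existence and uniqueness of the bounded solution of the fully nonlinear
backward integral equation characterizing equilibrium portfolios under GDA
preferences. -/
theorem equilibrium_integral_equation_exists_unique
    (T : ℝ) (hT : 0 < T) (d : ℕ) (hd : 1 ≤ d)
    (lam : ℝ → EuclideanSpace ℝ (Fin d)) (hlam_meas : Measurable lam)
    (hlam_bdd : ∃ Λ : ℝ, ∀ t : ℝ, ‖lam t‖ ≤ Λ)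
    (m : ℝ → ℝ → ℝ) (C₀ : ℝ) (hC₀ : 0 < C₀)
    (hm_pos : ∀ x y : ℝ, 0 ≤ x → 0 < m x y)
    (hm_bdd : ∀ x y : ℝ, 0 ≤ x → m x y ≤ C₀)
    (hm_locLip : ∀ p : ℝ × ℝ, 0 ≤ p.1 → ∃ K : NNReal, ∃ s ∈ nhds p,
      LipschitzOnWith K (fun q : ℝ × ℝ => m q.1 q.2)
        (s ∩ {q : ℝ × ℝ | 0 ≤ q.1})) :
    (∃ a : ℝ → EuclideanSpace ℝ (Fin d), Measurable a ∧
      (∃ C : ℝ, ∀ t : ℝ, ‖a t‖ ≤ C) ∧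
      (∀ t ∈ Set.Ico 0 T,
        a t = m (Real.sqrt (∫ s in Set.Ioc t T, ‖a s‖ ^ 2))
                (∫ s in Set.Ioc t T, (inner ℝ (a s) (lam s) : ℝ)) • lam t)) ∧
    (∀ a b : ℝ → EuclideanSpace ℝ (Fin d),
      Measurable a → (∃ C : ℝ, ∀ t : ℝ, ‖a t‖ ≤ C) →
      (∀ t ∈ Set.Ico 0 T,
        a t = m (Real.sqrt (∫ s in Set.Ioc t T, ‖a s‖ ^ 2))
                (∫ s in Set.Ioc t T, (inner ℝ (a s) (lam s) : ℝ)) • lam t) →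
      Measurable b → (∃ C : ℝ, ∀ t : ℝ, ‖b t‖ ≤ C) →
      (∀ t ∈ Set.Ico 0 T,
        b t = m (Real.sqrt (∫ s in Set.Ioc t T, ‖b s‖ ^ 2))
                (∫ s in Set.Ioc t T, (inner ℝ (b s) (lam s) : ℝ)) • lam t) →
      ∀ t ∈ Set.Ico 0 T, a t = b t) :=
  equilibrium_integral_equation_exists_unique_general T d lam hlam_meas hlam_bdd m C₀ hm_pos hm_bdd
    hm_locLip
end
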